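/- arXiv:1707.05126 — 3 statements merged into one kernel-verified Lean document; each statement's English description precedes it below -/
import Mathlib

section
/- If f(z) = z + Σ_{n≥2} a_n z^n is analytic on the unit disk U and Σ_{n≥2} (1+(n-1)γ)(n-α-(n-1)αβ)|a_n| ≤ 1-α, then Re[ (z f'(z) + γ z² f''(z)) / (γ z (f'(z) + β z f''(z)) + (1-γ)(β z f'(z) + (1-β) f(z))) ] > α for all z ∈ U. -/
/-!
In terms of the coefficients, the numerator and the denominator of the quotient are
`N = z + ∑ A_k a_k z^k` and `D = z + ∑ C_k a_k z^k` with `A_k = k (1 + (k-1)γ)` and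
`C_k = (1 + (k-1)γ)(1 + (k-1)β)`, and the weight in the hypothesis is
`(1 + (k-1)γ)(k - α - (k-1)αβ) = (A_k - C_k) + (1 - α) C_k`. For `0 < |z| < 1` this gives
`|N - D| + (1 - α)|D - z| ≤ (1 - α)|z|² < (1 - α)|z|`, hence `|N - D| < (1 - α)|D|`,
i.e. `N / D` lies in the disc of radius `1 - α` about `1`.
Termwise differentiation of the series of `f` is justified by the Cauchy estimates,
as `∑ k |a_k| < ∞`.
-/

open Complex Metric Filter

section PowerSeries

variable {c : ℕ → ℂ} {g : ℂ → ℂ} {k : ℕ}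

theorem norm_mul_pow_le_of_mem_ball (n : ℕ) {w : ℂ} (hw : w ∈ ball (0 : ℂ) 1) :
    ‖c n * w ^ (n + k + 1)‖ ≤ ‖c n‖ := by
  rw [mem_ball_zero_iff] at hw
  rw [norm_mul, norm_pow]
  exact mul_le_of_le_one_right (norm_nonneg _) (pow_le_one₀ (norm_nonneg _) hw.le)

theorem differentiableOn_of_hasSum_pow (hc : Summable fun n => ‖c n‖)
    (hg : ∀ w ∈ ball (0 : ℂ) 1, HasSum (fun n => c n * w ^ (n + k + 1)) (g w)) :
    DifferentiableOn ℂ g (ball 0 1) :=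
  (differentiableOn_tsum_of_summable_norm hc (fun n => by fun_prop) isOpen_ball
    fun n _ => norm_mul_pow_le_of_mem_ball n).congr fun w hw => (hg w hw).tsum_eq.symm

theorem hasSum_deriv_of_hasSum_pow (hc : Summable fun n => ‖c n‖)
    (hg : ∀ w ∈ ball (0 : ℂ) 1, HasSum (fun n => c n * w ^ (n + k + 1)) (g w)) :
    ∀ z ∈ ball (0 : ℂ) 1,
      HasSum (fun n => ((n + k + 1 : ℕ) : ℂ) * c n * z ^ (n + k)) (deriv g z) := by
  intro z hz
  have hgz : g =ᶠ[nhds z] fun w => ∑' n, c n * w ^ (n + k + 1) :=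
    eventuallyEq_of_mem (isOpen_ball.mem_nhds hz) fun w hw => (hg w hw).tsum_eq.symm
  rw [hgz.deriv_eq]
  have hderiv (n : ℕ) :
      deriv (fun w => c n * w ^ (n + k + 1)) z = ((n + k + 1 : ℕ) : ℂ) * c n * z ^ (n + k) := by
    simp only [deriv_const_mul_field', deriv_pow_field, Nat.add_sub_cancel]
    ring
  simpa only [hderiv] using hasSum_deriv_of_summable_norm
    (F := fun n w => c n * w ^ (n + k + 1)) hc (fun n => by fun_prop) isOpen_ball
    (fun n _ => norm_mul_pow_le_of_mem_ball n) hz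

end PowerSeries

theorem hasSum_deriv_and_deriv_deriv_of_hasSum {f : ℂ → ℂ} {a : ℕ → ℂ}
    (ha : Summable fun n : ℕ => ((n : ℝ) + 2) * ‖a (n + 2)‖)
    (hf : ∀ z ∈ ball (0 : ℂ) 1, HasSum (fun n => a (n + 2) * z ^ (n + 2)) (f z - z))
    {z : ℂ} (hz : z ∈ ball (0 : ℂ) 1) :
    HasSum (fun n : ℕ => ((n : ℂ) + 2) * a (n + 2) * z ^ (n + 1)) (deriv f z - 1) ∧
      HasSum (fun n : ℕ => ((n : ℂ) + 2) * ((n : ℂ) + 1) * a (n + 2) * z ^ n) (deriv (deriv f) z) := by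
  have hc0 : Summable fun n => ‖a (n + 2)‖ :=
    ha.of_nonneg_of_le (fun _ => norm_nonneg _) fun n =>
      le_mul_of_one_le_left (norm_nonneg _) (by linarith [n.cast_nonneg (α := ℝ)])
  have hc1 : Summable fun n => ‖((n + 1 + 1 : ℕ) : ℂ) * a (n + 2)‖ := by
    refine ha.congr fun n => ?_
    rw [norm_mul, Complex.norm_natCast]
    push_cast
    ring
  have hg1 := hasSum_deriv_of_hasSum_pow (g := fun w => f w - w) (k := 1) hc0 hf
  have hg2 := hasSum_deriv_of_hasSum_pow (k := 0) hc1 hg1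
  have hdf : ∀ w ∈ ball (0 : ℂ) 1, deriv f w = deriv (fun w => f w - w) w + 1 := by
    intro w hw
    have hdiff := (differentiableOn_of_hasSum_pow (k := 1) hc0 hf).differentiableAt
      (isOpen_ball.mem_nhds hw)
    conv_lhs => rw [show f = fun w => (f w - w) + w from funext fun w => (sub_add_cancel _ _).symm]
    exact (hdiff.hasDerivAt.add (hasDerivAt_id' w)).deriv
  constructor
  · rw [hdf z hz, add_sub_cancel_right]
    convert hg1 z hz using 1
    funext n
    push_cast
    ring
  · rw [(eventuallyEq_of_mem (isOpen_ball.mem_nhds hz) hdf).deriv_eq, deriv_add_const]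
    convert hg2 z hz using 1
    funext n
    push_cast
    ring

theorem lt_re_div_of_norm_sub_lt {α : ℝ} {N D : ℂ} (h : ‖N - D‖ < (1 - α) * ‖D‖) :
    α < (N / D).re := by
  have hD : D ≠ 0 := by
    rintro rfl
    simp only [norm_zero, mul_zero] at h
    exact (norm_nonneg _).not_gt h
  have hq : ‖(N - D) / D‖ < 1 - α := by
    rwa [norm_div, div_lt_iff₀ (norm_pos_iff.2 hD)]
  have hre : (N / D).re = 1 + ((N - D) / D).re := by
    rw [sub_div, div_self hD, sub_re, one_re]
    ring
  linarith [neg_abs_le ((N - D) / D).re, abs_re_le_norm ((N - D) / D)]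

theorem norm_le_of_hasSum_mul_pow {z s : ℂ} {c : ℕ → ℂ} {E : ℕ → ℝ} (hz : ‖z‖ ≤ 1)
    (hE : ∀ n, 0 ≤ E n) (hsum : Summable fun n => E n * ‖c n‖)
    (hs : HasSum (fun n => (E n : ℂ) * c n * z ^ (n + 2)) s) :
    ‖s‖ ≤ ‖z‖ ^ 2 * ∑' n, E n * ‖c n‖ := by
  refine hs.norm_le_of_bounded (hsum.hasSum.mul_left (‖z‖ ^ 2)) fun n => ?_
  rw [norm_mul, norm_mul, norm_real, Real.norm_of_nonneg (hE n), norm_pow, pow_add]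
  have hzn : ‖z‖ ^ n ≤ 1 := pow_le_one₀ (norm_nonneg z) hz
  have := mul_nonneg (hE n) (norm_nonneg (c n))
  nlinarith [mul_le_mul_of_nonneg_left hzn (mul_nonneg this (sq_nonneg ‖z‖))]

theorem norm_sub_lt_of_hasSum {δ : ℝ} (hδ : 0 < δ) {z N D : ℂ} (hz0 : z ≠ 0) (hz1 : ‖z‖ < 1)
    {c : ℕ → ℂ} {A C : ℕ → ℝ} (hCA : ∀ n, C n ≤ A n) (hC : ∀ n, 0 ≤ C n)
    (hsum : Summable fun n => (A n - C n + δ * C n) * ‖c n‖)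
    (hle : ∑' n, (A n - C n + δ * C n) * ‖c n‖ ≤ δ)
    (hN : HasSum (fun n => (A n : ℂ) * c n * z ^ (n + 2)) (N - z))
    (hD : HasSum (fun n => (C n : ℂ) * c n * z ^ (n + 2)) (D - z)) :
    ‖N - D‖ < δ * ‖D‖ := by
  have hE (n : ℕ) : 0 ≤ A n - C n := sub_nonneg.2 (hCA n)
  have hsE : Summable fun n => (A n - C n) * ‖c n‖ :=
    hsum.of_nonneg_of_le (fun n => mul_nonneg (hE n) (norm_nonneg _)) fun n =>
      mul_le_mul_of_nonneg_right (le_add_of_nonneg_right (mul_nonneg hδ.le (hC n))) (norm_nonneg _)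
  have hsC : Summable fun n => C n * ‖c n‖ := by
    refine (hsum.div_const δ).of_nonneg_of_le (fun n => mul_nonneg (hC n) (norm_nonneg _))
      fun n => ?_
    rw [le_div_iff₀ hδ]
    nlinarith [mul_nonneg (hE n) (norm_nonneg (c n))]
  have hsplit : ∑' n, (A n - C n + δ * C n) * ‖c n‖ =
      ∑' n, (A n - C n) * ‖c n‖ + δ * ∑' n, C n * ‖c n‖ := by
    rw [← tsum_mul_left, ← hsE.tsum_add (hsC.mul_left δ)]
    exact tsum_congr fun n => by ring
  have hND : HasSum (fun n => ((A n - C n : ℝ) : ℂ) * c n * z ^ (n + 2)) (N - D) := by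
    have h := hN.sub hD
    rw [sub_sub_sub_cancel_right] at h
    exact h.congr_fun fun n => by push_cast; ring
  have hNDle := norm_le_of_hasSum_mul_pow hz1.le hE hsE hND
  have hDle := norm_le_of_hasSum_mul_pow hz1.le hC hsC hD
  have hDge : ‖z‖ - ‖D - z‖ ≤ ‖D‖ := by
    simpa [norm_sub_rev] using norm_sub_norm_le z (z - D)
  have hzpos : 0 < ‖z‖ := norm_pos_iff.2 hz0
  have hsq : ‖z‖ ^ 2 * δ < δ * ‖z‖ := by nlinarith [mul_pos hδ hzpos]
  nlinarith [mul_le_mul_of_nonneg_left hle (sq_nonneg ‖z‖)]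

theorem one_sub_mul_le_coeff {α β γ : ℝ} (hα0 : 0 ≤ α) (hα1 : α < 1) (hβ1 : β < 1)
    (hγ0 : 0 ≤ γ) (n : ℕ) :
    (1 - α) * ((n : ℝ) + 2) ≤
      (1 + ((n : ℝ) + 1) * γ) * (((n : ℝ) + 2) - α - ((n : ℝ) + 1) * α * β) := by
  have hn : (0 : ℝ) ≤ n := n.cast_nonneg
  have hlow : (1 - α) * ((n : ℝ) + 2) ≤ ((n : ℝ) + 2) - α - ((n : ℝ) + 1) * α * β := by
    nlinarith [mul_nonneg (mul_nonneg (by linarith : (0 : ℝ) ≤ n + 1) hα0)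
      (by linarith : (0 : ℝ) ≤ 1 - β)]
  nlinarith [mul_nonneg (mul_nonneg (by linarith : (0 : ℝ) ≤ n + 1) hγ0)
    (le_trans (by positivity : (0 : ℝ) ≤ (1 - α) * ((n : ℝ) + 2)) hlow)]

theorem summable_coeff_of_summable_weighted {α β γ : ℝ} {a : ℕ → ℂ} (hα0 : 0 ≤ α)
    (hα1 : α < 1) (hβ1 : β < 1) (hγ0 : 0 ≤ γ)
    (hsum : Summable fun n : ℕ =>
      (1 + ((n : ℝ) + 1) * γ) * (((n : ℝ) + 2) - α - ((n : ℝ) + 1) * α * β) * ‖a (n + 2)‖) :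
    Summable fun n : ℕ => ((n : ℝ) + 2) * ‖a (n + 2)‖ := by
  refine (hsum.div_const (1 - α)).of_nonneg_of_le (fun n => by positivity) fun n => ?_
  rw [le_div_iff₀ (by linarith)]
  nlinarith [mul_le_mul_of_nonneg_right (one_sub_mul_le_coeff hα0 hα1 hβ1 hγ0 n)
    (norm_nonneg (a (n + 2)))]

theorem stmt0_general (α β γ : ℝ) (hα0 : 0 ≤ α) (hα1 : α < 1) (hβ0 : 0 ≤ β) (hβ1 : β < 1)
    (hγ0 : 0 ≤ γ) (f : ℂ → ℂ) (a : ℕ → ℂ)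
    (hf : ∀ z ∈ Metric.ball (0 : ℂ) 1,
      HasSum (fun n : ℕ => a (n + 2) * z ^ (n + 2)) (f z - z))
    (hsum : Summable (fun n : ℕ =>
      (1 + ((n : ℝ) + 1) * γ) * (((n : ℝ) + 2) - α - ((n : ℝ) + 1) * α * β) * ‖a (n + 2)‖))
    (hle : ∑' n : ℕ,
      (1 + ((n : ℝ) + 1) * γ) * (((n : ℝ) + 2) - α - ((n : ℝ) + 1) * α * β) * ‖a (n + 2)‖
        ≤ 1 - α) :
    ∀ z ∈ Metric.ball (0 : ℂ) 1, z ≠ 0 →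
      α < (((z * deriv f z + (γ : ℂ) * z ^ 2 * deriv (deriv f) z) /
        ((γ : ℂ) * z * (deriv f z + (β : ℂ) * z * deriv (deriv f) z) +
          (1 - (γ : ℂ)) * ((β : ℂ) * z * deriv f z + (1 - (β : ℂ)) * f z))).re) := by
  intro z hz hz0
  obtain ⟨hf1, hf2⟩ := hasSum_deriv_and_deriv_deriv_of_hasSum
    (summable_coeff_of_summable_weighted hα0 hα1 hβ1 hγ0 hsum) hf hz
  have hN := (hf1.mul_left z).add (hf2.mul_left ((γ : ℂ) * z ^ 2))
  have hD := ((hf1.mul_left (((γ : ℂ) + (1 - γ) * β) * z)).add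
    (hf2.mul_left ((γ : ℂ) * β * z ^ 2))).add ((hf z hz).mul_left ((1 - (γ : ℂ)) * (1 - β)))
  refine lt_re_div_of_norm_sub_lt (norm_sub_lt_of_hasSum (by linarith) hz0
    (mem_ball_zero_iff.1 hz) (c := fun n => a (n + 2))
    (A := fun n => ((n : ℝ) + 2) * (1 + ((n : ℝ) + 1) * γ))
    (C := fun n => (1 + ((n : ℝ) + 1) * γ) * (1 + ((n : ℝ) + 1) * β))
    (fun n => ?_) (fun n => by positivity) ?_ ?_ ?_ ?_)
  · have hβ : (0 : ℝ) ≤ 1 - β := by linarith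
    nlinarith [mul_nonneg (mul_nonneg hβ (by positivity : (0 : ℝ) ≤ (n : ℝ) + 1))
      (by positivity : (0 : ℝ) ≤ 1 + ((n : ℝ) + 1) * γ)]
  · convert hsum using 2 with n
    ring
  · convert hle using 3 with n
    ring
  · convert! hN using 1
    · funext n
      push_cast
      ring
    · ring
  · convert! hD using 1
    · funext n
      push_cast
      ring
    · ring

theorem stmt0 (α β γ : ℝ) (hα0 : 0 ≤ α) (hα1 : α < 1) (hβ0 : 0 ≤ β) (hβ1 : β < 1)
    (hγ0 : 0 ≤ γ) (hγ1 : γ ≤ 1) (f : ℂ → ℂ) (a : ℕ → ℂ)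
    (hf : ∀ z ∈ Metric.ball (0 : ℂ) 1,
      HasSum (fun n : ℕ => a (n + 2) * z ^ (n + 2)) (f z - z))
    (hsum : Summable (fun n : ℕ =>
      (1 + ((n : ℝ) + 1) * γ) * (((n : ℝ) + 2) - α - ((n : ℝ) + 1) * α * β) * ‖a (n + 2)‖))
    (hle : ∑' n : ℕ,
      (1 + ((n : ℝ) + 1) * γ) * (((n : ℝ) + 2) - α - ((n : ℝ) + 1) * α * β) * ‖a (n + 2)‖
        ≤ 1 - α) :
    ∀ z ∈ Metric.ball (0 : ℂ) 1, z ≠ 0 →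
      α < (((z * deriv f z + (γ : ℂ) * z ^ 2 * deriv (deriv f) z) /
        ((γ : ℂ) * z * (deriv f z + (β : ℂ) * z * deriv (deriv f) z) +
          (1 - (γ : ℂ)) * ((β : ℂ) * z * deriv f z + (1 - (β : ℂ)) * f z))).re) :=
  stmt0_general α β γ hα0 hα1 hβ0 hβ1 hγ0 f a hf hsum hle
end

section
/- If f(z) = z - Σ_{n≥2} a_n z^n with a_n ≥ 0 is analytic on U and Re[ (z f'(z) + γ z² f''(z)) / (γ z (f'(z) + β z f''(z)) + (1-γ)(β z f'(z) + (1-β) f(z))) ] > α for all z ∈ U, then Σ_{n≥2} (1+(n-1)γ)(n-α-(n-1)αβ) a_n ≤ 1-α. -/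
/-!
On the segment `(0, 1)` the function `f` and its derivatives are real, and the numerator `N` and
denominator `D` of the quotient are both `r` minus power series with nonnegative coefficients:
`D(r) = r - ∑ (1 + β(n-1))(1 + γ(n-1)) aₙ rⁿ` and `N(r) = r - ∑ n(1 + γ(n-1)) aₙ rⁿ`.
The hypothesis `Re (N / D) > α ≥ 0` rules out `D(r) = 0`, and `D(r) = r + O(r²)` is positive near
`0`, so by the intermediate value theorem `D > 0` on `(0, 1)`. Then `N - αD > 0` reads
`∑ (1 + (n-1)γ)(n - α - (n-1)αβ) aₙ rⁿ < (1 - α) r`, and since the coefficients are nonnegative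
we may let `r → 1`.
-/

open Complex FormalMultilinearSeries Filter Topology Set
open scoped NNReal ENNReal

theorem Metric.eball_one_eq_ball {E : Type*} [PseudoMetricSpace E] (x : E) :
    Metric.eball x 1 = Metric.ball x 1 := by
  rw [← ENNReal.coe_one, Metric.eball_coe, NNReal.coe_one]

theorem HasFPowerSeriesOnBall.hasSum_ofScalars {𝕜 : Type*} [NontriviallyNormedField 𝕜]
    {f : 𝕜 → 𝕜} {c : ℕ → 𝕜} {r : ℝ≥0∞} (h : HasFPowerSeriesOnBall f (ofScalars 𝕜 c) 0 r)
    {z : 𝕜} (hz : z ∈ Metric.eball 0 r) : HasSum (fun n => c n * z ^ n) (f z) := by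
  simpa [ofScalars_apply_eq, mul_comm] using h.hasSum hz

theorem HasFPowerSeriesOnBall.deriv_ofScalars {𝕜 : Type*} [NontriviallyNormedField 𝕜]
    [CompleteSpace 𝕜] {f : 𝕜 → 𝕜} {c : ℕ → 𝕜} {x : 𝕜} {r : ℝ≥0∞}
    (h : HasFPowerSeriesOnBall f (ofScalars 𝕜 c) x r) :
    HasFPowerSeriesOnBall (deriv f) (ofScalars 𝕜 fun n => (n + 1) * c (n + 1)) x r := by
  convert (ContinuousLinearMap.apply 𝕜 𝕜 1).comp_hasFPowerSeriesOnBall h.fderiv using 1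
  · rfl
  ext n : 1
  rw [← mkPiRing_coeff_eq (ofScalars 𝕜 _) n,
    ← mkPiRing_coeff_eq (ContinuousLinearMap.compFormalMultilinearSeries _ _) n, coeff_ofScalars]
  congr 1
  change _ = (ofScalars 𝕜 c).derivSeries.coeff n 1
  rw [derivSeries_coeff_one, coeff_ofScalars, nsmul_eq_mul]
  push_cast
  rfl

theorem hasFPowerSeriesOnBall_ofScalars_of_hasSum {𝕜 : Type*} [RCLike 𝕜] {f : 𝕜 → 𝕜}
    {c : ℕ → 𝕜} {R : ℝ≥0} (hR : 0 < R)
    (h : ∀ z ∈ Metric.ball (0 : 𝕜) R, HasSum (fun n => c n * z ^ n) (f z)) :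
    HasFPowerSeriesOnBall f (ofScalars 𝕜 c) 0 R where
  r_le := by
    refine ENNReal.le_of_forall_nnreal_lt fun r hr =>
      (ofScalars 𝕜 c).le_radius_of_tendsto (l := 0) ?_
    have hr : ((r : ℝ) : 𝕜) ∈ Metric.ball (0 : 𝕜) R := by
      simpa using ENNReal.coe_lt_coe.1 hr
    simpa [ofScalars_norm] using (h _ hr).summable.tendsto_atTop_zero.norm
  r_pos := ENNReal.coe_pos.2 hR
  hasSum hy := by
    rw [Metric.eball_coe] at hy
    simpa [ofScalars_apply_eq, mul_comm] using h _ hy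

theorem IsPreconnected.pos_of_eventually_pos {X R : Type*} [TopologicalSpace X] [LinearOrder R]
    [TopologicalSpace R] [OrderClosedTopology R] [Zero R] {s : Set X} (hs : IsPreconnected s)
    {g : X → R} (hg : ContinuousOn g s) (hne : ∀ x ∈ s, g x ≠ 0) {l : Filter X} [l.NeBot]
    (hl : l ≤ 𝓟 s) (hpos : ∀ᶠ x in l, 0 < g x) {x : X} (hx : x ∈ s) : 0 < g x := by
  by_contra! hgx
  obtain ⟨y, hy, hgy⟩ := hs.intermediate_value₂_eventually₁ hx hl hg continuousOn_const hgx
    (hpos.mono fun _ => le_of_lt)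
  exact hne y hy hgy

theorem eventually_lt_of_hasSum_mul_pow_add_two {u : ℕ → ℝ} {φ : ℝ → ℝ} (hu : ∀ n, 0 ≤ u n)
    (hφ : ∀ r ∈ Ioo (0 : ℝ) 1, HasSum (fun n => u n * r ^ (n + 2)) (φ r)) :
    ∀ᶠ r in 𝓝[>] 0, φ r < r := by
  set E := φ (1 / 2)
  have hE : HasSum (fun n => u n * (1 / 2 : ℝ) ^ (n + 2)) E := hφ _ (by norm_num)
  have hE0 : 0 ≤ E := hE.nonneg fun n => mul_nonneg (hu n) (by positivity)
  have hquad : ∀ r ∈ Ioc (0 : ℝ) (1 / 2), φ r ≤ 4 * r ^ 2 * E := by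
    intro r hr
    refine hasSum_le (fun n => ?_) (hφ r ⟨hr.1, by linarith [hr.2]⟩) (hE.mul_left (4 * r ^ 2))
    have : r ^ n ≤ (1 / 2) ^ n := pow_le_pow_left₀ hr.1.le hr.2 n
    calc u n * r ^ (n + 2) = r ^ 2 * (u n * r ^ n) := by ring
      _ ≤ r ^ 2 * (u n * (1 / 2) ^ n) := by gcongr; exact hu n
      _ = 4 * r ^ 2 * (u n * (1 / 2) ^ (n + 2)) := by ring
  filter_upwards [Ioo_mem_nhdsGT (show (0 : ℝ) < min (1 / 2) (1 / (4 * E + 1)) by positivity)]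
    with r ⟨hr0, hr⟩
  have hr2 : r < 1 / 2 := hr.trans_le (min_le_left _ _)
  have hrE : r * (4 * E + 1) < 1 :=
    (lt_div_iff₀ (by positivity)).1 (hr.trans_le (min_le_right _ _))
  calc φ r ≤ 4 * r ^ 2 * E := hquad r ⟨hr0, hr2.le⟩
    _ < r := by nlinarith

theorem summable_and_tsum_le_of_hasSum_mul_pow_le {u : ℕ → ℝ} {C : ℝ} {k : ℕ}
    (hu : ∀ n, 0 ≤ u n)
    (h : ∀ r ∈ Ioo (0 : ℝ) 1, ∃ s, HasSum (fun n => u n * r ^ (n + k)) s ∧ s ≤ C) :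
    Summable u ∧ ∑' n, u n ≤ C := by
  have hpartial : ∀ m, ∑ n ∈ Finset.range m, u n ≤ C := by
    intro m
    have hc : Continuous fun r : ℝ => ∑ n ∈ Finset.range m, u n * r ^ (n + k) := by fun_prop
    have hlim : Tendsto (fun r : ℝ => ∑ n ∈ Finset.range m, u n * r ^ (n + k)) (𝓝[<] 1)
        (𝓝 (∑ n ∈ Finset.range m, u n)) := by
      simpa using (hc.tendsto 1).mono_left nhdsWithin_le_nhds
    refine le_of_tendsto hlim ?_
    filter_upwards [Ioo_mem_nhdsLT zero_lt_one] with r hr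
    obtain ⟨s, hs, hsC⟩ := h r hr
    exact (sum_le_hasSum _ (fun n _ => mul_nonneg (hu n) (pow_nonneg hr.1.le _)) hs).trans hsC
  exact ⟨summable_of_sum_range_le hu hpartial, Real.tsum_le_of_sum_range_le hu hpartial⟩

theorem hasSum_re_of_hasSum_ofReal_mul_pow {u : ℕ → ℝ} {r : ℝ} {w : ℂ}
    (h : HasSum (fun n => ((u n : ℝ) : ℂ) * (r : ℂ) ^ (n + 2)) (r - w)) :
    ((w.re : ℝ) : ℂ) = w ∧ HasSum (fun n => u n * r ^ (n + 2)) (r - w.re) := by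
  have h' : HasSum (fun n => ((u n * r ^ (n + 2) : ℝ) : ℂ)) (r - w) := by
    push_cast
    exact h
  obtain ⟨hre, him⟩ := (Complex.hasSum_iff _ _).1 h'
  simp only [ofReal_re, ofReal_im, sub_re, sub_im, zero_sub] at hre him
  refine ⟨Complex.ext rfl ?_, hre⟩
  simpa using (neg_eq_zero.1 (him.unique hasSum_zero)).symm

theorem ofReal_mem_ball_zero_one {r : ℝ} (hr : r ∈ Ioo (0 : ℝ) 1) :
    (r : ℂ) ∈ Metric.ball (0 : ℂ) 1 := by
  simpa [abs_lt] using ⟨by linarith [hr.1], hr.2⟩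

def HasClassTExpansion (a : ℕ → ℝ) (f : ℂ → ℂ) : Prop :=
  ∀ z ∈ Metric.ball (0 : ℂ) 1, HasSum (fun n : ℕ => ((a (n + 2) : ℝ) : ℂ) * z ^ (n + 2)) (z - f z)

def classTCoeff (a : ℕ → ℝ) : ℕ → ℝ
  | 0 => 0
  | 1 => 1
  | n + 2 => -a (n + 2)

noncomputable def quotNum (γ : ℝ) (f : ℂ → ℂ) (z : ℂ) : ℂ :=
  z * deriv f z + (γ : ℂ) * z ^ 2 * deriv (deriv f) z

noncomputable def quotDen (β γ : ℝ) (f : ℂ → ℂ) (z : ℂ) : ℂ :=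
  (γ : ℂ) * z * (deriv f z + (β : ℂ) * z * deriv (deriv f) z) +
    (1 - (γ : ℂ)) * ((β : ℂ) * z * deriv f z + (1 - (β : ℂ)) * f z)

namespace HasClassTExpansion

variable {β γ : ℝ} {a : ℕ → ℝ} {f : ℂ → ℂ} {z : ℂ}

theorem hasFPowerSeriesOnBall (hf : HasClassTExpansion a f) :
    HasFPowerSeriesOnBall f (ofScalars ℂ fun n => (classTCoeff a n : ℂ)) 0 1 := by
  have h := hasFPowerSeriesOnBall_ofScalars_of_hasSum
    (c := fun n => (classTCoeff a n : ℂ)) (R := 1) one_pos fun z hz => by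
      rw [← hasSum_nat_add_iff' 2]
      have hfz := (hf z (by simpa using hz)).neg
      rw [show -(z - f z) = f z - z by ring] at hfz
      simpa [classTCoeff, Finset.sum_range_succ] using hfz
  simpa using h

theorem hasSum_mul_deriv (hf : HasClassTExpansion a f) (hz : z ∈ Metric.ball (0 : ℂ) 1) :
    HasSum (fun n : ℕ => ((((n : ℝ) + 2) * a (n + 2) : ℝ) : ℂ) * z ^ (n + 2))
      (z - z * deriv f z) := by
  have h := hf.hasFPowerSeriesOnBall.deriv_ofScalars.hasSum_ofScalars
    (by rwa [Metric.eball_one_eq_ball])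
  rw [← hasSum_nat_add_iff' 1] at h
  have hsum : z - z * deriv f z = -z * (deriv f z - ∑ i ∈ Finset.range 1,
      ((i : ℂ) + 1) * (classTCoeff a (i + 1) : ℂ) * z ^ i) := by
    simp only [Finset.sum_range_one, classTCoeff]
    push_cast
    ring
  rw [hsum]
  refine (h.mul_left (-z)).congr_fun fun n => ?_
  simp only [classTCoeff]
  push_cast
  ring

theorem hasSum_sq_mul_deriv_deriv (hf : HasClassTExpansion a f)
    (hz : z ∈ Metric.ball (0 : ℂ) 1) :
    HasSum (fun n : ℕ => ((((n : ℝ) + 1) * ((n : ℝ) + 2) * a (n + 2) : ℝ) : ℂ) * z ^ (n + 2))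
      (-(z ^ 2 * deriv (deriv f) z)) := by
  have h := hf.hasFPowerSeriesOnBall.deriv_ofScalars.deriv_ofScalars.hasSum_ofScalars
    (by rwa [Metric.eball_one_eq_ball])
  rw [← neg_mul]
  refine (h.mul_left (-z ^ 2)).congr_fun fun n => ?_
  simp only [classTCoeff]
  push_cast
  ring

theorem hasSum_quotNum (hf : HasClassTExpansion a f) (hz : z ∈ Metric.ball (0 : ℂ) 1) :
    HasSum (fun n : ℕ =>
        (((((n : ℝ) + 2) * (1 + γ * ((n : ℝ) + 1))) * a (n + 2) : ℝ) : ℂ) * z ^ (n + 2))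
      (z - quotNum γ f z) := by
  have h := (hf.hasSum_mul_deriv hz).add ((hf.hasSum_sq_mul_deriv_deriv hz).mul_left (γ : ℂ))
  rw [show z - quotNum γ f z = z - z * deriv f z + γ * -(z ^ 2 * deriv (deriv f) z) by
    unfold quotNum; ring]
  refine h.congr_fun fun n => ?_
  push_cast
  ring

theorem hasSum_quotDen (hf : HasClassTExpansion a f) (hz : z ∈ Metric.ball (0 : ℂ) 1) :
    HasSum (fun n : ℕ =>
        ((((1 + β * ((n : ℝ) + 1)) * (1 + γ * ((n : ℝ) + 1))) * a (n + 2) : ℝ) : ℂ) *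
          z ^ (n + 2))
      (z - quotDen β γ f z) := by
  have h1 := hf.hasSum_mul_deriv hz
  have h2 := hf.hasSum_sq_mul_deriv_deriv hz
  have h := ((h1.add (h2.mul_left (β : ℂ))).mul_left (γ : ℂ)).add
    ((h1.mul_left (β : ℂ)).add ((hf z hz).mul_left (1 - (β : ℂ))) |>.mul_left (1 - (γ : ℂ)))
  rw [show z - quotDen β γ f z = γ * (z - z * deriv f z + β * -(z ^ 2 * deriv (deriv f) z)) +
      (1 - γ) * (β * (z - z * deriv f z) + (1 - β) * (z - f z)) by unfold quotDen; ring]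
  refine h.congr_fun fun n => ?_
  push_cast
  ring

theorem continuousOn_quotDen (hf : HasClassTExpansion a f) :
    ContinuousOn (quotDen β γ f) (Metric.ball 0 1) := by
  have hA : AnalyticOnNhd ℂ f (Metric.ball 0 1) := by
    simpa [Metric.eball_one_eq_ball] using hf.hasFPowerSeriesOnBall.analyticOnNhd
  have h0 := hA.continuousOn
  have h1 := hA.deriv.continuousOn
  have h2 := hA.deriv.deriv.continuousOn
  unfold quotDen
  fun_prop

theorem re_quotDen_pos {α : ℝ} (hα0 : 0 ≤ α) (hβ0 : 0 ≤ β) (hγ0 : 0 ≤ γ) (ha : ∀ n, 0 ≤ a n)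
    (hf : HasClassTExpansion a f)
    (hre : ∀ z ∈ Metric.ball (0 : ℂ) 1, z ≠ 0 → α < (quotNum γ f z / quotDen β γ f z).re)
    {r : ℝ} (hr : r ∈ Ioo (0 : ℝ) 1) : 0 < (quotDen β γ f r).re := by
  have hreal (s : ℝ) (hs : s ∈ Ioo (0 : ℝ) 1) := hasSum_re_of_hasSum_ofReal_mul_pow
    (hf.hasSum_quotDen (β := β) (γ := γ) (ofReal_mem_ball_zero_one hs))
  have hcoeff (n : ℕ) : 0 ≤ (1 + β * ((n : ℝ) + 1)) * (1 + γ * ((n : ℝ) + 1)) * a (n + 2) := by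
    have := ha (n + 2)
    positivity
  refine isPreconnected_Ioo.pos_of_eventually_pos (g := fun s : ℝ => (quotDen β γ f s).re)
    ?_ ?_ (l := 𝓝[>] 0) (le_principal_iff.2 (Ioo_mem_nhdsGT one_pos)) ?_ hr
  · exact continuous_re.comp_continuousOn <| hf.continuousOn_quotDen.comp
      continuous_ofReal.continuousOn fun s hs => ofReal_mem_ball_zero_one hs
  · intro s hs hzero
    have := hre s (ofReal_mem_ball_zero_one hs) (ofReal_ne_zero.2 hs.1.ne')
    rw [← (hreal s hs).1, hzero, ofReal_zero, div_zero, zero_re] at this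
    linarith
  · filter_upwards [eventually_lt_of_hasSum_mul_pow_add_two hcoeff fun s hs => (hreal s hs).2]
      with s hs
    linarith

end HasClassTExpansion

theorem stmt2_general (α β γ : ℝ) (hα0 : 0 ≤ α) (hα1 : α < 1) (hβ0 : 0 ≤ β) (hβ1 : β < 1)
    (hγ0 : 0 ≤ γ) (f : ℂ → ℂ) (a : ℕ → ℝ) (ha : ∀ n, 0 ≤ a n)
    (hf : ∀ z ∈ Metric.ball (0 : ℂ) 1,
      HasSum (fun n : ℕ => ((a (n + 2) : ℝ) : ℂ) * z ^ (n + 2)) (z - f z))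
    (hre : ∀ z ∈ Metric.ball (0 : ℂ) 1, z ≠ 0 →
      α < (((z * deriv f z + (γ : ℂ) * z ^ 2 * deriv (deriv f) z) /
        ((γ : ℂ) * z * (deriv f z + (β : ℂ) * z * deriv (deriv f) z) +
          (1 - (γ : ℂ)) * ((β : ℂ) * z * deriv f z + (1 - (β : ℂ)) * f z))).re)) :
    Summable (fun n : ℕ =>
      (1 + ((n : ℝ) + 1) * γ) * (((n : ℝ) + 2) - α - ((n : ℝ) + 1) * α * β) * a (n + 2)) ∧
    ∑' n : ℕ,
      (1 + ((n : ℝ) + 1) * γ) * (((n : ℝ) + 2) - α - ((n : ℝ) + 1) * α * β) * a (n + 2)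
        ≤ 1 - α := by
  have hf : HasClassTExpansion a f := hf
  have hweight (n : ℕ) :
      0 ≤ (1 + ((n : ℝ) + 1) * γ) * (((n : ℝ) + 2) - α - ((n : ℝ) + 1) * α * β) * a (n + 2) := by
    have hαβ : α * β ≤ 1 := by nlinarith
    have : 0 ≤ ((n : ℝ) + 2) - α - ((n : ℝ) + 1) * α * β := by
      nlinarith [n.cast_nonneg (α := ℝ)]
    have := ha (n + 2)
    positivity
  refine summable_and_tsum_le_of_hasSum_mul_pow_le (k := 2) hweight fun r hr => ?_
  have hz := ofReal_mem_ball_zero_one hr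
  obtain ⟨hN, hNsum⟩ := hasSum_re_of_hasSum_ofReal_mul_pow (hf.hasSum_quotNum (γ := γ) hz)
  obtain ⟨hD, hDsum⟩ :=
    hasSum_re_of_hasSum_ofReal_mul_pow (hf.hasSum_quotDen (β := β) (γ := γ) hz)
  have hDpos := hf.re_quotDen_pos hα0 hβ0 hγ0 ha hre hr
  have hlt := hre r hz (ofReal_ne_zero.2 hr.1.ne')
  rw [← quotNum, ← quotDen, ← hN, ← hD, ← ofReal_div, ofReal_re, lt_div_iff₀ hDpos] at hlt
  refine ⟨_, (hNsum.sub (hDsum.mul_left α)).congr_fun fun n => by ring, ?_⟩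
  nlinarith [hr.1, hr.2]

theorem stmt2 (α β γ : ℝ) (hα0 : 0 ≤ α) (hα1 : α < 1) (hβ0 : 0 ≤ β) (hβ1 : β < 1)
    (hγ0 : 0 ≤ γ) (hγ1 : γ ≤ 1) (f : ℂ → ℂ) (a : ℕ → ℝ) (ha : ∀ n, 0 ≤ a n)
    (hf : ∀ z ∈ Metric.ball (0 : ℂ) 1,
      HasSum (fun n : ℕ => ((a (n + 2) : ℝ) : ℂ) * z ^ (n + 2)) (z - f z))
    (hre : ∀ z ∈ Metric.ball (0 : ℂ) 1, z ≠ 0 →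
      α < (((z * deriv f z + (γ : ℂ) * z ^ 2 * deriv (deriv f) z) /
        ((γ : ℂ) * z * (deriv f z + (β : ℂ) * z * deriv (deriv f) z) +
          (1 - (γ : ℂ)) * ((β : ℂ) * z * deriv f z + (1 - (β : ℂ)) * f z))).re)) :
    Summable (fun n : ℕ =>
      (1 + ((n : ℝ) + 1) * γ) * (((n : ℝ) + 2) - α - ((n : ℝ) + 1) * α * β) * a (n + 2)) ∧
    ∑' n : ℕ,
      (1 + ((n : ℝ) + 1) * γ) * (((n : ℝ) + 2) - α - ((n : ℝ) + 1) * α * β) * a (n + 2)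
        ≤ 1 - α :=
  stmt2_general α β γ hα0 hα1 hβ0 hβ1 hγ0 f a ha hf hre
end

section
/- A function f(z) = z - Σ_{n≥2} a_n z^n with a_n ≥ 0 is convex of order α (i.e., Re(1 + z f''(z)/f'(z)) > α on U) if and only if Σ_{n≥2} n(n-α) a_n ≤ 1-α. -/
/-!
With `c n = a (n + 2)`, on the segment `[0, 1)` the functions
`D r = 1 - f' r = ∑ (n+2) c n r^(n+1)` and `E r = -f'' r = ∑ (n+2)(n+1) c n r^n` are real, and
`r E + (1 - α) D = ∑ (n+2)(n+2-α) c n r^(n+1)`. Where `D r < 1`, convexity of order `α` at `r`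
reads `r E < (1 - α)(1 - D)`, so this weighted series is `< 1 - α`, which forces
`D r < (1 - α)/(2 - α)`. As `D` is continuous with `D 0 = 0`, it can never reach `1`, so the bound
holds for every `r < 1`, and `r → 1` gives the coefficient inequality. Conversely, for `|z| = r`
the coefficient inequality gives `|z f''(z)| ≤ r E r < (1 - α)(1 - D r) ≤ (1 - α)|f'(z)|`.
-/

open Complex Filter Topology Set Metric

theorem differentiableAt_and_hasSum_deriv_of_hasSum_mul_pow {F : ℂ → ℂ} {c : ℕ → ℝ}
    {e : ℕ → ℕ} {R : ℝ} (hc : ∀ n, 0 ≤ c n)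
    (hF : ∀ z ∈ ball (0 : ℂ) R, HasSum (fun n => (c n : ℂ) * z ^ (e n + 1)) (F z))
    {z : ℂ} (hz : z ∈ ball (0 : ℂ) R) :
    DifferentiableAt ℂ F z ∧
      HasSum (fun n => (((e n + 1 : ℝ) * c n : ℝ) : ℂ) * z ^ e n) (deriv F z) := by
  obtain ⟨s, hzs, hsR⟩ := exists_between (mem_ball_zero_iff.mp hz)
  have hs0 : 0 ≤ s := (norm_nonneg z).trans hzs.le
  have hsum : Summable fun n => c n * s ^ (e n + 1) := by
    have := (hF s (by simpa [abs_of_nonneg hs0] using hsR)).summable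
    exact_mod_cast this
  have hbound : ∀ n, ∀ w ∈ ball (0 : ℂ) s, ‖(c n : ℂ) * w ^ (e n + 1)‖ ≤ c n * s ^ (e n + 1) := by
    intro n w hw
    rw [norm_mul, norm_pow, norm_real, Real.norm_of_nonneg (hc n)]
    gcongr
    · exact hc n
    · exact (mem_ball_zero_iff.mp hw).le
  have hdiff : ∀ n, DifferentiableOn ℂ (fun w : ℂ => (c n : ℂ) * w ^ (e n + 1)) (ball 0 s) :=
    fun n => by fun_prop
  have hFeq : (fun w => ∑' n, (c n : ℂ) * w ^ (e n + 1)) =ᶠ[𝓝 z] F := by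
    filter_upwards [isOpen_ball.mem_nhds hz] with w hw using (hF w hw).tsum_eq
  have hzs' : z ∈ ball (0 : ℂ) s := mem_ball_zero_iff.mpr hzs
  refine ⟨((differentiableOn_tsum_of_summable_norm hsum hdiff isOpen_ball hbound).differentiableAt
    (isOpen_ball.mem_nhds hzs')).congr_of_eventuallyEq hFeq.symm, ?_⟩
  rw [← hFeq.deriv_eq]
  refine (hasSum_deriv_of_summable_norm hsum hdiff isOpen_ball hbound hzs').congr_fun fun n => ?_
  simp
  ring

theorem summable_and_tsum_le_of_hasSum_mul_pow_succ_le {w : ℕ → ℝ} (hw : ∀ n, 0 ≤ w n)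
    {S : ℝ → ℝ} {C : ℝ} (hS : ∀ r ∈ Ico (0 : ℝ) 1, HasSum (fun n => w n * r ^ (n + 1)) (S r))
    (hSC : ∀ r ∈ Ico (0 : ℝ) 1, S r ≤ C) :
    Summable w ∧ ∑' n, w n ≤ C := by
  have hpartial : ∀ F : Finset ℕ, ∑ n ∈ F, w n ≤ C := by
    intro F
    have hcont : Continuous fun r : ℝ => ∑ n ∈ F, w n * r ^ (n + 1) := by fun_prop
    have hlim : Tendsto (fun r : ℝ => ∑ n ∈ F, w n * r ^ (n + 1)) (𝓝[<] 1)
        (𝓝 (∑ n ∈ F, w n)) := by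
      simpa using (hcont.tendsto 1).mono_left nhdsWithin_le_nhds
    refine le_of_tendsto hlim ?_
    filter_upwards [Ioo_mem_nhdsLT one_pos] with r hr
    have hr' : r ∈ Ico (0 : ℝ) 1 := Ioo_subset_Ico_self hr
    exact (sum_le_hasSum F (fun n _ => mul_nonneg (hw n) (pow_nonneg hr.1.le _)) (hS r hr')).trans
      (hSC r hr')
  exact ⟨summable_of_sum_le hw hpartial, Real.tsum_le_of_sum_le hw hpartial⟩

def IsConvexOfOrder (α : ℝ) (f : ℂ → ℂ) : Prop :=
  ∀ z ∈ ball (0 : ℂ) 1, α < (1 + z * deriv (deriv f) z / deriv f z).re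

/-- `c n` stands for the coefficient of `z ^ (n + 2)`. -/
def CoeffCondition (α : ℝ) (c : ℕ → ℝ) : Prop :=
  Summable (fun n : ℕ => ((n : ℝ) + 2) * (((n : ℝ) + 2) - α) * c n) ∧
    ∑' n : ℕ, ((n : ℝ) + 2) * (((n : ℝ) + 2) - α) * c n ≤ 1 - α

section

variable {f : ℂ → ℂ} {c : ℕ → ℝ} {α : ℝ}

theorem coeffCondition_of_forall_mul_lt (hc : ∀ n, 0 ≤ c n) (hα : α < 1) {D E : ℝ → ℝ}
    (hD : ∀ r ∈ Ico (0 : ℝ) 1, HasSum (fun n : ℕ => ((n : ℝ) + 2) * c n * r ^ (n + 1)) (D r))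
    (hE : ∀ r ∈ Ico (0 : ℝ) 1,
      HasSum (fun n : ℕ => ((n : ℝ) + 2) * ((n : ℝ) + 1) * c n * r ^ n) (E r))
    (hDcont : ContinuousOn D (Ico 0 1))
    (h : ∀ r ∈ Ico (0 : ℝ) 1, D r < 1 → r * E r < (1 - α) * (1 - D r)) :
    CoeffCondition α c := by
  have hQ : ∀ r ∈ Ico (0 : ℝ) 1, HasSum (fun n : ℕ => ((n : ℝ) + 2) * (((n : ℝ) + 2) - α) * c n *
      r ^ (n + 1)) (r * E r + (1 - α) * D r) := fun r hr =>
    (((hE r hr).mul_left r).add ((hD r hr).mul_left (1 - α))).congr_fun fun n => by ring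
  have hDQ : ∀ r ∈ Ico (0 : ℝ) 1, (2 - α) * D r ≤ r * E r + (1 - α) * D r := by
    intro r hr
    refine hasSum_le (fun n => ?_) ((hD r hr).mul_left (2 - α)) (hQ r hr)
    have := hc n
    have := hr.1
    rw [← sub_nonneg, show ((n : ℝ) + 2) * (((n : ℝ) + 2) - α) * c n * r ^ (n + 1) -
      (2 - α) * (((n : ℝ) + 2) * c n * r ^ (n + 1)) = ((n : ℝ) + 2) * n * c n * r ^ (n + 1)
      by ring]
    positivity
  have h2α : 0 < 2 - α := by linarith
  have hgap : ∀ r ∈ Ico (0 : ℝ) 1, D r < 1 → D r < (1 - α) / (2 - α) := by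
    intro r hr hD1
    rw [lt_div_iff₀ h2α]
    linarith [h r hr hD1, hDQ r hr]
  have hD0 : D 0 = 0 := (hD 0 ⟨le_rfl, one_pos⟩).unique (by simp)
  have hDlt : ∀ r ∈ Ico (0 : ℝ) 1, D r < 1 := by
    intro r hr
    by_contra! hD1
    have hκ : (1 - α) / (2 - α) ∈ Icc (D 0) (D r) := by
      rw [hD0]
      refine ⟨by positivity, ?_⟩
      rw [div_le_iff₀ h2α]
      nlinarith
    obtain ⟨s, hs, hDs⟩ :=
      intermediate_value_Icc hr.1 (hDcont.mono (Icc_subset_Ico_right hr.2)) hκ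
    have hs' : s ∈ Ico (0 : ℝ) 1 := ⟨hs.1, hs.2.trans_lt hr.2⟩
    have hκ1 : (1 - α) / (2 - α) < 1 := by rw [div_lt_one h2α]; linarith
    exact (hgap s hs' (hDs ▸ hκ1)).ne hDs
  refine summable_and_tsum_le_of_hasSum_mul_pow_succ_le (fun n => ?_) hQ fun r hr => ?_
  · have := hc n
    have : (0 : ℝ) ≤ n := n.cast_nonneg
    have : 0 ≤ (n : ℝ) + 2 - α := by linarith
    positivity
  · linarith [h r hr (hDlt r hr)]

theorem CoeffCondition.norm_mul_lt (hcond : CoeffCondition α c) (hc : ∀ n, 0 ≤ c n)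
    (hα : α < 1) {z P Q : ℂ} (hz : ‖z‖ < 1)
    (hP : HasSum (fun n : ℕ => ((((n : ℝ) + 2) * c n : ℝ) : ℂ) * z ^ (n + 1)) P)
    (hQ : HasSum (fun n : ℕ => ((((n : ℝ) + 2) * ((n : ℝ) + 1) * c n : ℝ) : ℂ) * z ^ n) Q) :
    ‖z * Q‖ < (1 - α) * ‖1 - P‖ := by
  obtain ⟨hsum, hle⟩ := hcond
  set r := ‖z‖ with hr
  have hr0 : 0 ≤ r := norm_nonneg z
  have hw : ∀ n : ℕ, 0 ≤ ((n : ℝ) + 2) * (((n : ℝ) + 2) - α) * c n := fun n => by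
    have := hc n
    have : 0 ≤ (n : ℝ) + 2 - α := by linarith [n.cast_nonneg (α := ℝ)]
    positivity
  have hWr : Summable fun n : ℕ => ((n : ℝ) + 2) * (((n : ℝ) + 2) - α) * c n * r ^ (n + 1) :=
    hsum.of_nonneg_of_le (fun n => mul_nonneg (hw n) (pow_nonneg hr0 _))
      (fun n => mul_le_of_le_one_right (hw n) (pow_le_one₀ hr0 hz.le))
  have hDs : Summable fun n : ℕ => ((n : ℝ) + 2) * c n * r ^ (n + 1) := by
    refine hWr.of_nonneg_of_le (fun n => by have := hc n; positivity) (fun n => ?_)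
    have := hc n
    have : 0 ≤ (n : ℝ) + 1 - α := by linarith [n.cast_nonneg (α := ℝ)]
    rw [← sub_nonneg, show ((n : ℝ) + 2) * (((n : ℝ) + 2) - α) * c n * r ^ (n + 1) -
      ((n : ℝ) + 2) * c n * r ^ (n + 1) = ((n : ℝ) + 2) * ((n : ℝ) + 1 - α) * c n * r ^ (n + 1)
      by ring]
    positivity
  have hEs : Summable fun n : ℕ => ((n : ℝ) + 2) * ((n : ℝ) + 1) * c n * r ^ (n + 1) := by
    refine hWr.of_nonneg_of_le (fun n => by have := hc n; positivity) (fun n => ?_)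
    have := hc n
    have : 0 ≤ 1 - α := by linarith
    rw [← sub_nonneg, show ((n : ℝ) + 2) * (((n : ℝ) + 2) - α) * c n * r ^ (n + 1) -
      ((n : ℝ) + 2) * ((n : ℝ) + 1) * c n * r ^ (n + 1) =
        ((n : ℝ) + 2) * (1 - α) * c n * r ^ (n + 1) by ring]
    positivity
  set D := ∑' n : ℕ, ((n : ℝ) + 2) * c n * r ^ (n + 1)
  set E := ∑' n : ℕ, ((n : ℝ) + 2) * ((n : ℝ) + 1) * c n * r ^ (n + 1)
  have hPD : ‖P‖ ≤ D := hP.norm_le_of_bounded hDs.hasSum fun n => by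
    rw [norm_mul, norm_pow, norm_real, Real.norm_of_nonneg (by have := hc n; positivity)]
  have hQE : ‖z * Q‖ ≤ E := (hQ.mul_left z).norm_le_of_bounded hEs.hasSum fun n => by
    rw [norm_mul, norm_mul, norm_pow, norm_real, Real.norm_of_nonneg (by have := hc n; positivity),
      ← hr, pow_succ]
    exact le_of_eq (by ring)
  have hsplit : E + (1 - α) * D =
      ∑' n : ℕ, ((n : ℝ) + 2) * (((n : ℝ) + 2) - α) * c n * r ^ (n + 1) :=
    ((hEs.hasSum.add (hDs.hasSum.mul_left (1 - α))).congr_fun fun n => by ring).unique hWr.hasSum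
  have hWle : ∑' n : ℕ, ((n : ℝ) + 2) * (((n : ℝ) + 2) - α) * c n * r ^ (n + 1) ≤ (1 - α) * r :=
    calc _ ≤ (∑' n : ℕ, ((n : ℝ) + 2) * (((n : ℝ) + 2) - α) * c n) * r :=
          hasSum_le (fun n => mul_le_mul_of_nonneg_left
              (pow_le_of_le_one hr0 hz.le n.succ_ne_zero) (hw n))
            hWr.hasSum (hsum.hasSum.mul_right r)
      _ ≤ (1 - α) * r := mul_le_mul_of_nonneg_right hle hr0
  have hden : 1 - D ≤ ‖1 - P‖ := by
    have := norm_sub_norm_le (1 : ℂ) P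
    rw [norm_one] at this
    linarith
  calc ‖z * Q‖ ≤ E := hQE
    _ < (1 - α) * (1 - D) := by nlinarith
    _ ≤ (1 - α) * ‖1 - P‖ := by gcongr

theorem differentiableAt_and_hasSum_one_sub_deriv (hc : ∀ n, 0 ≤ c n)
    (hf : ∀ z ∈ ball (0 : ℂ) 1, HasSum (fun n : ℕ => (c n : ℂ) * z ^ (n + 2)) (z - f z))
    {z : ℂ} (hz : z ∈ ball (0 : ℂ) 1) :
    DifferentiableAt ℂ f z ∧
      HasSum (fun n : ℕ => ((((n : ℝ) + 2) * c n : ℝ) : ℂ) * z ^ (n + 1)) (1 - deriv f z) := by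
  obtain ⟨hdiff, hsum⟩ :=
    differentiableAt_and_hasSum_deriv_of_hasSum_mul_pow (F := fun w => w - f w)
      (e := fun n => n + 1) hc hf hz
  have hfd : DifferentiableAt ℂ f z := by simpa using differentiableAt_id.sub hdiff
  rw [deriv_fun_sub differentiableAt_fun_id hfd, deriv_id''] at hsum
  refine ⟨hfd, hsum.congr_fun fun n => ?_⟩
  push_cast
  ring

theorem hasSum_neg_deriv_deriv (hc : ∀ n, 0 ≤ c n)
    (hf : ∀ z ∈ ball (0 : ℂ) 1, HasSum (fun n : ℕ => (c n : ℂ) * z ^ (n + 2)) (z - f z))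
    {z : ℂ} (hz : z ∈ ball (0 : ℂ) 1) :
    HasSum (fun n : ℕ => ((((n : ℝ) + 2) * ((n : ℝ) + 1) * c n : ℝ) : ℂ) * z ^ n)
      (-deriv (deriv f) z) := by
  have hsum := (differentiableAt_and_hasSum_deriv_of_hasSum_mul_pow
    (F := fun w => 1 - deriv f w) (c := fun n => ((n : ℝ) + 2) * c n) (e := fun n => n)
    (fun n => mul_nonneg (by positivity) (hc n))
    (fun w hw => (differentiableAt_and_hasSum_one_sub_deriv hc hf hw).2) hz).2
  rw [deriv_const_sub] at hsum
  exact hsum.congr_fun fun n => by push_cast; ring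

theorem coeffCondition_of_isConvexOfOrder (hc : ∀ n, 0 ≤ c n) (hα : α < 1)
    (hf : ∀ z ∈ ball (0 : ℂ) 1, HasSum (fun n : ℕ => (c n : ℂ) * z ^ (n + 2)) (z - f z))
    (hconv : IsConvexOfOrder α f) : CoeffCondition α c := by
  have hball : ∀ r ∈ Ico (0 : ℝ) 1, (r : ℂ) ∈ ball (0 : ℂ) 1 := fun r hr => by
    simpa [abs_of_nonneg hr.1] using hr.2
  have hreal : ∀ {x : ℕ → ℝ} {s : ℂ}, HasSum (fun n => (x n : ℂ)) s →
      HasSum x s.re ∧ (s.re : ℂ) = s := fun h =>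
    ⟨hasSum_re h, (hasSum_ofReal.mpr (hasSum_re h)).unique h⟩
  have hD : ∀ r ∈ Ico (0 : ℝ) 1, HasSum (fun n : ℕ => ((n : ℝ) + 2) * c n * r ^ (n + 1))
      (1 - deriv f r).re ∧ ((1 - deriv f r).re : ℂ) = 1 - deriv f r := fun r hr =>
    hreal <| (differentiableAt_and_hasSum_one_sub_deriv hc hf (hball r hr)).2.congr_fun
      fun n => by push_cast; ring
  have hE : ∀ r ∈ Ico (0 : ℝ) 1, HasSum (fun n : ℕ => ((n : ℝ) + 2) * ((n : ℝ) + 1) * c n * r ^ n)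
      (-deriv (deriv f) r).re ∧ ((-deriv (deriv f) r).re : ℂ) = -deriv (deriv f) r :=
    fun r hr => hreal <| (hasSum_neg_deriv_deriv hc hf (hball r hr)).congr_fun
      fun n => by push_cast; ring
  have hcont : ContinuousOn (deriv f) (ball (0 : ℂ) 1) :=
    (DifferentiableOn.deriv (fun z hz => (differentiableAt_and_hasSum_one_sub_deriv hc hf
      hz).1.differentiableWithinAt) isOpen_ball).continuousOn
  refine coeffCondition_of_forall_mul_lt hc hα (fun r hr => (hD r hr).1) (fun r hr => (hE r hr).1)
    ?_ fun r hr hD1 => ?_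
  · exact (continuous_re.comp_continuousOn (continuousOn_const.sub
      (hcont.comp continuous_ofReal.continuousOn hball)))
  · set D := (1 - deriv f r).re
    set E := (-deriv (deriv f) r).re
    have h := hconv r (hball r hr)
    rw [show deriv f r = 1 - (D : ℂ) by rw [(hD r hr).2]; ring,
      show deriv (deriv f) r = -(E : ℂ) by rw [(hE r hr).2]; ring,
      show 1 + (r : ℂ) * -(E : ℂ) / (1 - D) = ((1 - r * E / (1 - D) : ℝ) : ℂ) by push_cast; ring,
      ofReal_re] at h
    rw [← div_lt_iff₀ (sub_pos.mpr hD1)]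
    linarith

theorem CoeffCondition.isConvexOfOrder (hcond : CoeffCondition α c) (hc : ∀ n, 0 ≤ c n) (hα : α < 1)
    (hf : ∀ z ∈ ball (0 : ℂ) 1, HasSum (fun n : ℕ => (c n : ℂ) * z ^ (n + 2)) (z - f z)) :
    IsConvexOfOrder α f := by
  intro z hz
  have hlt := hcond.norm_mul_lt hc hα (mem_ball_zero_iff.mp hz)
    (differentiableAt_and_hasSum_one_sub_deriv hc hf hz).2 (hasSum_neg_deriv_deriv hc hf hz)
  rw [sub_sub_cancel, mul_neg, norm_neg] at hlt
  have hquot : ‖z * deriv (deriv f) z / deriv f z‖ < 1 - α := by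
    rw [norm_div, div_lt_iff₀ (pos_of_mul_pos_right ((norm_nonneg _).trans_lt hlt) (by linarith))]
    linarith
  have := abs_lt.mp ((abs_re_le_norm _).trans_lt hquot)
  rw [add_re, one_re]
  linarith

end

theorem stmt10_general (α : ℝ) (hα1 : α < 1)
    (f : ℂ → ℂ) (a : ℕ → ℝ) (ha : ∀ n, 0 ≤ a n)
    (hf : ∀ z ∈ Metric.ball (0 : ℂ) 1,
      HasSum (fun n : ℕ => ((a (n + 2) : ℝ) : ℂ) * z ^ (n + 2)) (z - f z)) :
    (∀ z ∈ Metric.ball (0 : ℂ) 1,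
      α < ((1 + z * deriv (deriv f) z / deriv f z).re)) ↔
    (Summable (fun n : ℕ => ((n : ℝ) + 2) * (((n : ℝ) + 2) - α) * a (n + 2)) ∧
    ∑' n : ℕ, ((n : ℝ) + 2) * (((n : ℝ) + 2) - α) * a (n + 2) ≤ 1 - α) :=
  ⟨coeffCondition_of_isConvexOfOrder (fun n => ha (n + 2)) hα1 hf,
    fun h => CoeffCondition.isConvexOfOrder h (fun n => ha (n + 2)) hα1 hf⟩

theorem stmt10 (α : ℝ) (hα0 : 0 ≤ α) (hα1 : α < 1)
    (f : ℂ → ℂ) (a : ℕ → ℝ) (ha : ∀ n, 0 ≤ a n)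
    (hf : ∀ z ∈ Metric.ball (0 : ℂ) 1,
      HasSum (fun n : ℕ => ((a (n + 2) : ℝ) : ℂ) * z ^ (n + 2)) (z - f z)) :
    (∀ z ∈ Metric.ball (0 : ℂ) 1,
      α < ((1 + z * deriv (deriv f) z / deriv f z).re)) ↔
    (Summable (fun n : ℕ => ((n : ℝ) + 2) * (((n : ℝ) + 2) - α) * a (n + 2)) ∧
    ∑' n : ℕ, ((n : ℝ) + 2) * (((n : ℝ) + 2) - α) * a (n + 2) ≤ 1 - α) :=
  stmt10_general α hα1 f a ha hf
end
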